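/- arXiv:2107.09421 — 3 statements merged into one kernel-verified Lean document; each statement's English description precedes it below -/
import Mathlib

section
/- For every square-free word w over the ternary alphabet {0,1,2}, the sequence of minimal local periods is unimodal: per(w,p−1) ≤ per(w,p) for every position p with 2 ≤ p ≤ M(w), and per(w,p) ≤ per(w,p−1) for every position p with M(w)+1 ≤ p ≤ |w|−1, where M(w) = ⌊(|w|+1)/2⌋. -/
namespace CritFact

/-- A word is square-free if it contains no factor `v ++ v` with `v` nonempty. -/
def SqFree {α : Type*} (w : List α) : Prop :=
  ∀ v : List α, v ≠ [] → ¬ (v ++ v) <:+: w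

/-- A position in `w` is an integer `p` with `1 ≤ p < |w|`. -/
def IsPos {α : Type*} (w : List α) (p : ℕ) : Prop :=
  1 ≤ p ∧ p < w.length

/-- `u` is a repetition word of `w` at position `p` (with `w = x ++ y`, `|x| = p`):
`u` is nonempty, one of `u`, `x` is a suffix of the other, and one of `u`, `y` is a
prefix of the other. -/
def IsRepWord {α : Type*} (w : List α) (p : ℕ) (u : List α) : Prop :=
  u ≠ [] ∧ (u <:+ w.take p ∨ w.take p <:+ u) ∧ (u <+: w.drop p ∨ w.drop p <+: u)

/-- The minimal local period of `w` at position `p`. -/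
noncomputable def locPer {α : Type*} (w : List α) (p : ℕ) : ℕ :=
  sInf {n | ∃ u : List α, IsRepWord w p u ∧ u.length = n}

/-- `q` is a period of `w` if `q > 0` and `w[i] = w[i+q]` whenever both are defined. -/
def HasPeriod {α : Type*} (w : List α) (q : ℕ) : Prop :=
  0 < q ∧ ∀ i : ℕ, i + q < w.length → w[i]? = w[i + q]?

/-- The minimal period of `w`. -/
noncomputable def per {α : Type*} (w : List α) : ℕ :=
  sInf {q | HasPeriod w q}

/-- A position `p` of `w` is critical if the minimal local period at `p` equals
the global period of `w`. -/
def IsCritical {α : Type*} (w : List α) (p : ℕ) : Prop :=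
  IsPos w p ∧ locPer w p = per w

open Classical in
/-- `eta w` is the number of critical positions of `w`. -/
noncomputable def eta {α : Type*} (w : List α) : ℕ :=
  ((Finset.Ico 1 w.length).filter (fun p => IsCritical w p)).card

/-- A word is unbordered if no nonempty proper prefix is also a suffix. -/
def Unbordered {α : Type*} (w : List α) : Prop :=
  ∀ v : List α, v ≠ [] → v ≠ w → ¬ (v <+: w ∧ v <:+ w)

/-- Ternary words. -/
abbrev Word := List (Fin 3)

/-- Thue's morphism `τ(0) = 012`, `τ(1) = 02`, `τ(2) = 1`. -/
def tau (a : Fin 3) : Word :=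
  if a = 0 then [0, 1, 2] else if a = 1 then [0, 2] else [1]

/-- The morphism `τ` applied to a word. -/
def tauW (w : Word) : Word := (w.map tau).flatten

/-- The infinite fixed point `m = 012021012102012⋯` of `τ` starting with `0`. -/
def mInf (n : ℕ) : Fin 3 := (tauW^[n + 1] [0]).getD n 0

/-- `u` is a (finite) factor of the infinite word `m`. -/
def FactorOfM (u : Word) : Prop :=
  ∃ i : ℕ, u = (List.range u.length).map (fun j => mInf (i + j))

/-- `u` is a factor of `m` occurring (starting) after position `i₀`. -/
def FactorOfMAfter (u : Word) (i₀ : ℕ) : Prop :=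
  ∃ i : ℕ, i₀ ≤ i ∧ u = (List.range u.length).map (fun j => mInf (i + j))

/-- `mWord n = τ^{2n-1}(0) · τ^{2n-3}(0) ⋯ τ³(0) · τ(0)`. -/
def mWord : ℕ → Word
  | 0 => []
  | n + 1 => tauW^[2 * n + 1] [0] ++ mWord n

/-- The word `w_x = 0x02x10x02x0`. -/
def wx (x : Word) : Word :=
  [0] ++ x ++ [0, 2] ++ x ++ [1, 0] ++ x ++ [0, 2] ++ x ++ [0]

end CritFact

/-!
Let `w = x y` be square-free with `|x| = p ≤ M(w)` and let `u` be a repetition word at `p`. If `u`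
were a proper suffix of `x`, then `u u` would be a factor of `w`: either `u` is a prefix of `y`, or
`y` is a prefix of `u`, and then `|u| ≤ p - 1 ≤ |y|` forces `u = y`. Hence `x` is a suffix of `u`,
and moving the last letter of `u` to its front gives a repetition word of the same length at
`p - 1`. The right half follows by reversing `w`.
-/

namespace CritFact

open List

variable {α : Type*} {w u : List α} {p : ℕ}

lemma prefix_or_prefix_of_concat {l y : List α} {a : α} (h : l ++ [a] <+: y ∨ y <+: l ++ [a]) :
    l <+: y ∨ y <+: l := by
  rcases h with h | h
  · exact .inl ((prefix_append l [a]).trans h)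
  · rcases prefix_concat_iff.mp h with rfl | h
    · exact .inl (prefix_append l [a])
    · exact .inr h

lemma SqFree.eq_nil_of_suffix_take_of_prefix_drop (hsf : SqFree w) (hx : u <:+ w.take p)
    (hy : u <+: w.drop p) : u = [] := by
  by_contra hne
  obtain ⟨s, hs⟩ := hx
  obtain ⟨t, ht⟩ := hy
  refine hsf u hne ⟨s, t, ?_⟩
  rw [← take_append_drop p w, ← hs, ← ht]
  simp

lemma SqFree.reverse (hsf : SqFree w) : SqFree w.reverse := fun v hv hvv =>
  hsf v.reverse (by simpa using hv) (by simpa using reverse_infix.mpr hvv)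

lemma isRepWord_drop_append_take (hw : w ≠ []) (p : ℕ) :
    IsRepWord w p (w.drop p ++ w.take p) := by
  refine ⟨fun h => hw ?_, .inr (suffix_append _ _), .inr (prefix_append _ _)⟩
  rw [← take_append_drop p w, (append_eq_nil_iff.mp h).1, (append_eq_nil_iff.mp h).2]
  rfl

lemma IsRepWord.reverse (hu : IsRepWord w p u) :
    IsRepWord w.reverse (w.length - p) u.reverse := by
  obtain ⟨hne, hx, hy⟩ := hu
  refine ⟨by simpa using hne, ?_, ?_⟩
  · rw [← reverse_drop, reverse_suffix, reverse_suffix]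
    exact hy
  · rw [← reverse_take, reverse_prefix, reverse_prefix]
    exact hx

lemma locPer_reverse (hp : p ≤ w.length) : locPer w.reverse (w.length - p) = locPer w p := by
  unfold locPer
  congr 1
  ext n
  constructor
  · rintro ⟨u, hu, rfl⟩
    have hu' := hu.reverse
    rw [reverse_reverse, length_reverse, Nat.sub_sub_self hp] at hu'
    exact ⟨u.reverse, hu', length_reverse⟩
  · rintro ⟨u, hu, rfl⟩
    exact ⟨u.reverse, hu.reverse, length_reverse⟩

lemma take_suffix_of_isRepWord (hsf : SqFree w) (hp : 2 * p ≤ w.length + 1)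
    (hu : IsRepWord w p u) : w.take p <:+ u := by
  obtain ⟨hne, hx | hx, hy⟩ := hu
  · have hsq : ¬ u <+: w.drop p := fun h => hne (hsf.eq_nil_of_suffix_take_of_prefix_drop hx h)
    obtain hy | hy := hy
    · exact absurd hy hsq
    have hux := hx.length_le
    have hyu := hy.length_le
    rw [length_take] at hux
    rw [length_drop] at hyu
    by_cases hlen : u.length = p
    · rw [hx.eq_of_length (by rw [length_take]; omega)]
    · exact absurd (hy.eq_of_length (by rw [length_drop]; omega) ▸ prefix_refl _) hsq
  · exact hx

lemma exists_isRepWord_pred_of_take_suffix (hp : p < w.length) (hu : IsRepWord w (p + 1) u)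
    (hx : w.take (p + 1) <:+ u) : ∃ v, IsRepWord w p v ∧ v.length = u.length := by
  obtain ⟨s, rfl⟩ := hx
  refine ⟨w[p] :: (s ++ w.take p), ⟨cons_ne_nil _ _, ?_, ?_⟩, ?_⟩
  · exact .inr ((suffix_append s _).trans (suffix_cons _ _))
  · rw [drop_eq_getElem_cons hp, cons_prefix_cons, cons_prefix_cons]
    simp only [true_and]
    apply prefix_or_prefix_of_concat
    rw [append_assoc, take_concat_get' w p hp]
    exact hu.2.2
  · simp only [length_cons, length_append, length_take]
    omega

lemma locPer_le_locPer_succ (hsf : SqFree w) (hp : 2 * (p + 1) ≤ w.length + 1) :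
    locPer w p ≤ locPer w (p + 1) := by
  have hw : w ≠ [] := ne_nil_of_length_pos (by omega)
  have hne : {n | ∃ u, IsRepWord w (p + 1) u ∧ u.length = n}.Nonempty :=
    ⟨_, _, isRepWord_drop_append_take hw (p + 1), rfl⟩
  obtain ⟨u, hu, hlen⟩ := Nat.sInf_mem hne
  obtain ⟨v, hv, hvu⟩ :=
    exists_isRepWord_pred_of_take_suffix (by omega) hu (take_suffix_of_isRepWord hsf hp hu)
  exact Nat.sInf_le ⟨v, hv, hvu.trans hlen⟩

end CritFact

/-- for a square-free ternary word `w` the minimal local periods form a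
unimodal sequence around the midpoint `M(w) = ⌊(|w|+1)/2⌋`. -/
theorem locPer_unimodal (w : CritFact.Word) (hsf : CritFact.SqFree w) :
    (∀ p : ℕ, 2 ≤ p → p ≤ (w.length + 1) / 2 →
      CritFact.locPer w (p - 1) ≤ CritFact.locPer w p) ∧
    (∀ p : ℕ, (w.length + 1) / 2 + 1 ≤ p → p ≤ w.length - 1 →
      CritFact.locPer w p ≤ CritFact.locPer w (p - 1)) := by
  refine ⟨fun p hp hpM => ?_, fun p hpM hpL => ?_⟩
  · obtain ⟨q, rfl⟩ : ∃ q, p = q + 1 := ⟨p - 1, by omega⟩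
    exact CritFact.locPer_le_locPer_succ hsf (by omega)
  · have h := CritFact.locPer_le_locPer_succ hsf.reverse (p := w.length - p)
      (by rw [List.length_reverse]; omega)
    rwa [CritFact.locPer_reverse (by omega), show w.length - p + 1 = w.length - (p - 1) by omega,
      CritFact.locPer_reverse (by omega)] at h
end

section
/- For every square-free word w over the ternary alphabet {0,1,2} with |w| ≥ 2, the set of critical points of w is a nonempty interval of positions containing the midpoint M(w) = ⌊(|w|+1)/2⌋: there exist positions q₁ ≤ M(w) and q₂ ≥ M(w) such that a position p is critical if and only if q₁ ≤ p ≤ q₂. -/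
theorem exists_not_iff_le_of_antitone {Q : ℕ → Prop} (hQ : Antitone Q) {M : ℕ} (hM : 1 ≤ M)
    (hQM : ¬Q M) : ∃ q₁, 1 ≤ q₁ ∧ q₁ ≤ M ∧ ∀ p, 1 ≤ p → (¬Q p ↔ q₁ ≤ p) := by
  classical
  have hex : ∃ p, 1 ≤ p ∧ ¬Q p := ⟨M, hM, hQM⟩
  exact ⟨Nat.find hex, (Nat.find_spec hex).1, Nat.find_min' hex ⟨hM, hQM⟩, fun p hp =>
    ⟨fun h => Nat.find_min' hex ⟨hp, h⟩, fun h hQp => (Nat.find_spec hex).2 (hQ h hQp)⟩⟩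

theorem exists_not_iff_le_of_monotone {P : ℕ → Prop} (hP : Monotone P) {M n : ℕ} (hMn : M < n)
    (hPM : ¬P M) : ∃ q₂, M ≤ q₂ ∧ q₂ < n ∧ ∀ p < n, (¬P p ↔ p ≤ q₂) := by
  classical
  have hM : M ≤ Nat.findGreatest (¬P ·) (n - 1) := Nat.le_findGreatest (by omega) hPM
  refine ⟨_, hM, (Nat.findGreatest_le (n - 1)).trans_lt (by omega), fun p hp =>
    ⟨fun h => Nat.le_findGreatest (by omega) h, fun h hPp => ?_⟩⟩
  exact Nat.findGreatest_spec (P := (¬P ·)) (by omega) hPM (hP h hPp)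

namespace CritFact

variable {α : Type*} {w u : List α} {p q ℓ : ℕ}

theorem hasPeriod_iff_drop_prefix (hq : 0 < q) : HasPeriod w q ↔ w.drop q <+: w := by
  simp only [HasPeriod, hq, true_and, List.prefix_iff_getElem?, List.length_drop,
    List.getElem_drop]
  constructor
  · intro h i hi
    rw [h i (by omega), Nat.add_comm, List.getElem?_eq_getElem]
  · intro h i hi
    rw [h i (by omega), List.getElem?_eq_getElem hi]
    simp only [Nat.add_comm]

theorem hasPeriod_length (hw : w ≠ []) : HasPeriod w w.length :=
  ⟨List.length_pos_iff.mpr hw, fun _ hi => by omega⟩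

theorem per_le (h : HasPeriod w q) : per w ≤ q := Nat.sInf_le h

theorem hasPeriod_per (hw : w ≠ []) : HasPeriod w (per w) :=
  Nat.sInf_mem (s := {q | HasPeriod w q}) ⟨_, hasPeriod_length hw⟩

theorem per_le_length (hw : w ≠ []) : per w ≤ w.length := per_le (hasPeriod_length hw)

theorem HasPeriod.drop_prefix_drop (h : HasPeriod w q) (hqp : q ≤ p) :
    w.drop p <+: w.drop (p - q) := by
  have := ((hasPeriod_iff_drop_prefix h.1).1 h).drop (p - q)
  rwa [List.drop_drop, Nat.add_sub_cancel' hqp] at this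

/-- A repetition word `u` at `p` with `|u| = ℓ < per w`, a suffix of `w.take p`, having
`w.drop p` as a proper prefix. -/
def ShortRightRep (w : List α) (p : ℕ) : Prop :=
  ∃ ℓ < per w, ℓ ≤ p ∧ w.length - p < ℓ ∧ w.drop p <+: w.drop (p - ℓ)

/-- A repetition word `u` at `p` with `|u| = ℓ < per w`, a prefix of `w.drop p`, having
`w.take p` as a proper suffix. -/
def ShortLeftRep (w : List α) (p : ℕ) : Prop :=
  ∃ ℓ < per w, p < ℓ ∧ ℓ ≤ w.length - p ∧ w.take p <+: w.drop ℓ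

theorem isRepWord_drop_take (hℓ : 0 < ℓ) (hℓp : ℓ ≤ p) (hp : p ≤ w.length)
    (h : w.drop p <+: w.drop (p - ℓ)) : IsRepWord w p ((w.take p).drop (p - ℓ)) := by
  refine ⟨List.ne_nil_of_length_pos (by simp; omega), Or.inl (List.drop_suffix _ _), ?_⟩
  exact List.prefix_or_prefix_of_prefix ((List.take_prefix p w).drop _) h

theorem isRepWord_take_drop (hℓ : 0 < ℓ) (hpℓ : p ≤ ℓ) (hp : p < w.length)
    (h : w.take p <+: w.drop ℓ) : IsRepWord w p ((w.drop p).take ℓ) := by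
  refine ⟨List.ne_nil_of_length_pos (by simp; omega), Or.inr ?_,
    Or.inl (List.take_prefix _ _)⟩
  have hx : (w.drop ℓ).take p = w.take p := by
    rw [List.prefix_iff_eq_take.1 h, List.length_take, Nat.min_eq_left hp.le]
  rw [← Nat.sub_add_cancel hpℓ, List.take_add, List.drop_drop, Nat.add_sub_cancel' hpℓ, hx]
  exact List.suffix_append _ _

theorem exists_isRepWord_of_hasPeriod (hq : HasPeriod w q) (hqn : q ≤ w.length)
    (hp : p < w.length) : ∃ u, IsRepWord w p u ∧ u.length = q := by
  have hshift := (hasPeriod_iff_drop_prefix hq.1).1 hq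
  by_cases hqp : q ≤ p
  · exact ⟨_, isRepWord_drop_take hq.1 hqp hp.le (hq.drop_prefix_drop hqp), by simp; omega⟩
  by_cases hpqn : p + q ≤ w.length
  · have h : w.take p <+: w.drop q :=
      List.prefix_of_prefix_length_le (List.take_prefix p w) hshift (by simp; omega)
    exact ⟨_, isRepWord_take_drop hq.1 (by omega) hp h, by simp; omega⟩
  -- `u` is external on both sides: `y` followed by the last `p + q - |w|` letters of `x`
  refine ⟨w.drop p ++ (w.take p).drop (w.length - q),
    ⟨by simp; omega, Or.inr ?_, Or.inr (List.prefix_append _ _)⟩, by simp; omega⟩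
  have hoverlap : (w.take p).take (w.length - q) = w.drop q := by
    rw [List.take_take, Nat.min_eq_left (by omega), List.prefix_iff_eq_take.1 hshift,
      List.length_drop]
  have key : w.drop q ++ (w.take p).drop (w.length - q) <:+
      w.drop p ++ (w.take p).drop (w.length - q) :=
    List.suffix_append_self_iff.2 (List.drop_suffix_drop_left w (by omega))
  rwa [← hoverlap, List.take_append_drop] at key

theorem locPer_le (hu : IsRepWord w p u) : locPer w p ≤ u.length := Nat.sInf_le ⟨u, hu, rfl⟩

theorem locPer_le_per (hp : p < w.length) : locPer w p ≤ per w := by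
  have hw : w ≠ [] := List.ne_nil_of_length_pos (by omega)
  obtain ⟨u, hu, hlen⟩ := exists_isRepWord_of_hasPeriod (hasPeriod_per hw) (per_le_length hw) hp
  exact hlen ▸ locPer_le hu

theorem exists_isRepWord_length_eq_locPer (hp : p < w.length) :
    ∃ u, IsRepWord w p u ∧ u.length = locPer w p := by
  have hw : w ≠ [] := List.ne_nil_of_length_pos (by omega)
  exact Nat.sInf_mem (s := {n | ∃ u, IsRepWord w p u ∧ u.length = n})
    ⟨_, exists_isRepWord_of_hasPeriod (hasPeriod_per hw) (per_le_length hw) hp⟩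

theorem not_sqFree_of_suffix_of_prefix (hu : u ≠ []) (hx : u <:+ w.take p)
    (hy : u <+: w.drop p) : ¬SqFree w := by
  obtain ⟨s, hs⟩ := hx
  obtain ⟨t, ht⟩ := hy
  refine fun hsf => hsf u hu ⟨s, t, ?_⟩
  rw [← List.take_append_drop p w, ← hs, ← ht]
  simp

theorem hasPeriod_of_take_suffix_of_drop_prefix (hu : u ≠ []) (hp : p ≤ w.length)
    (hx : w.take p <:+ u) (hy : w.drop p <+: u) : HasPeriod w u.length := by
  obtain ⟨v, rfl⟩ := hx
  rw [hasPeriod_iff_drop_prefix (List.length_pos_iff.mpr hu)]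
  have : (w.drop p).drop v.length <+: w.take p := by
    simpa only [List.drop_left] using hy.drop v.length
  rw [List.drop_drop] at this
  rw [List.length_append, List.length_take, Nat.min_eq_left hp, Nat.add_comm]
  exact this.trans (List.take_prefix p w)

theorem shortRightRep_of_suffix_of_prefix (hsf : SqFree w) (hu : u ≠ []) (hlt : u.length < per w)
    (hp : p ≤ w.length) (hx : u <:+ w.take p) (hy : w.drop p <+: u) : ShortRightRep w p := by
  set ℓ := u.length
  have hℓp : ℓ ≤ p := by simpa [hp] using hx.length_le
  have hℓn : w.length - p ≤ ℓ := by simpa using hy.length_le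
  have hne : w.length - p ≠ ℓ := fun h =>
    not_sqFree_of_suffix_of_prefix hu hx (hy.eq_of_length (by simpa using h) ▸ List.prefix_rfl) hsf
  have hu' : u = (w.take p).drop (p - ℓ) := by simpa [hp] using List.suffix_iff_eq_drop.1 hx
  refine ⟨ℓ, hlt, hℓp, by omega, hy.trans ?_⟩
  rw [hu']
  exact (List.take_prefix p w).drop _

theorem shortLeftRep_of_suffix_of_prefix (hsf : SqFree w) (hu : u ≠ []) (hlt : u.length < per w)
    (hp : p ≤ w.length) (hx : w.take p <:+ u) (hy : u <+: w.drop p) : ShortLeftRep w p := by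
  have hpℓ : p ≤ u.length := by simpa [hp] using hx.length_le
  have hℓn : u.length ≤ w.length - p := by simpa using hy.length_le
  have hne : p ≠ u.length := fun h =>
    not_sqFree_of_suffix_of_prefix hu (hx.eq_of_length (by simp; omega) ▸ List.suffix_rfl) hy hsf
  refine ⟨u.length, hlt, by omega, hℓn, ?_⟩
  obtain ⟨v, rfl⟩ := hx
  have := hy.drop v.length
  rw [List.drop_left, List.drop_drop] at this
  simpa [Nat.min_eq_left hp, Nat.add_comm] using this

theorem shortRightRep_or_shortLeftRep_of_isRepWord (hsf : SqFree w) (hp : p ≤ w.length)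
    (hu : IsRepWord w p u) (hlt : u.length < per w) : ShortRightRep w p ∨ ShortLeftRep w p := by
  obtain ⟨hne, hx | hx, hy | hy⟩ := hu
  · exact absurd hsf (not_sqFree_of_suffix_of_prefix hne hx hy)
  · exact Or.inl (shortRightRep_of_suffix_of_prefix hsf hne hlt hp hx hy)
  · exact Or.inr (shortLeftRep_of_suffix_of_prefix hsf hne hlt hp hx hy)
  · exact absurd (per_le (hasPeriod_of_take_suffix_of_drop_prefix hne hp hx hy)) (not_le.2 hlt)

theorem locPer_lt_per_iff (hsf : SqFree w) (hp : p < w.length) :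
    locPer w p < per w ↔ ShortRightRep w p ∨ ShortLeftRep w p := by
  constructor
  · intro hlt
    obtain ⟨u, hu, hlen⟩ := exists_isRepWord_length_eq_locPer hp
    exact shortRightRep_or_shortLeftRep_of_isRepWord hsf hp.le hu (hlen ▸ hlt)
  · rintro (⟨ℓ, hℓ, hℓp, hnℓ, h⟩ | ⟨ℓ, hℓ, hpℓ, -, h⟩)
    · have := locPer_le (isRepWord_drop_take (by omega) hℓp hp.le h)
      simp only [List.length_drop, List.length_take] at this
      omega
    · have := locPer_le (isRepWord_take_drop (by omega) hpℓ.le hp h)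
      simp only [List.length_take, List.length_drop] at this
      omega

theorem isCritical_iff (hsf : SqFree w) (hp : IsPos w p) :
    IsCritical w p ↔ ¬ShortRightRep w p ∧ ¬ShortLeftRep w p := by
  rw [← not_or, ← locPer_lt_per_iff hsf hp.2, (locPer_le_per hp.2).lt_iff_ne, not_not]
  exact and_iff_right hp

theorem shortRightRep_monotone : Monotone (ShortRightRep w) := by
  rintro p r hpr ⟨ℓ, hℓ, hℓp, hnℓ, h⟩
  refine ⟨ℓ, hℓ, by omega, by omega, ?_⟩
  have := h.drop (r - p)
  rwa [List.drop_drop, List.drop_drop, Nat.add_sub_cancel' hpr,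
    show p - ℓ + (r - p) = r - ℓ by omega] at this

theorem shortLeftRep_antitone : Antitone (ShortLeftRep w) := by
  rintro p r hpr ⟨ℓ, hℓ, hrℓ, hℓn, h⟩
  exact ⟨ℓ, hℓ, by omega, by omega, (List.take_prefix_take_left hpr).trans h⟩

theorem not_shortRightRep_midpoint : ¬ShortRightRep w ((w.length + 1) / 2) := by
  rintro ⟨ℓ, hℓ, hℓM, hMℓ, h⟩
  rw [show (w.length + 1) / 2 - ℓ = 0 by omega, List.drop_zero] at h
  have := per_le ((hasPeriod_iff_drop_prefix (q := (w.length + 1) / 2) (by omega)).2 h)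
  omega

theorem not_shortLeftRep_midpoint : ¬ShortLeftRep w ((w.length + 1) / 2) := by
  rintro ⟨ℓ, -, hMℓ, hℓM, -⟩
  omega

end CritFact

/-- for a square-free ternary word `w` with `|w| ≥ 2`, the critical
points form a nonempty interval of positions containing the midpoint `M(w)`. -/
theorem critical_points_form_interval (w : CritFact.Word)
    (hsf : CritFact.SqFree w) (h2 : 2 ≤ w.length) :
    ∃ q₁ q₂ : ℕ, CritFact.IsPos w q₁ ∧ CritFact.IsPos w q₂ ∧
      q₁ ≤ (w.length + 1) / 2 ∧ (w.length + 1) / 2 ≤ q₂ ∧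
      ∀ p : ℕ, CritFact.IsPos w p →
        (CritFact.IsCritical w p ↔ q₁ ≤ p ∧ p ≤ q₂) := by
  obtain ⟨q₁, hq₁, hq₁M, hleft⟩ := exists_not_iff_le_of_antitone
    (CritFact.shortLeftRep_antitone (w := w)) (by omega) CritFact.not_shortLeftRep_midpoint
  obtain ⟨q₂, hMq₂, hq₂, hright⟩ := exists_not_iff_le_of_monotone
    (CritFact.shortRightRep_monotone (w := w)) (n := w.length) (by omega)
    CritFact.not_shortRightRep_midpoint
  refine ⟨q₁, q₂, ⟨hq₁, by omega⟩, ⟨by omega, hq₂⟩, hq₁M, hMq₂, fun p hp => ?_⟩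
  rw [CritFact.isCritical_iff hsf hp, hright p hp.2, hleft p hp.1, and_comm]
end

section
/- For every n ≥ 1, both words αₙ = 102·mₙ·021 and βₙ = 102·mₙ·101202 are factors of the infinite word m; in particular αₙ and βₙ are square-free. -/
/-!
The word `m` is square-free by Thue's argument. Code each letter by `σ(a) = 0 1^(2-a)`
(`thueCode`). Then `σ ∘ τ = μ ∘ σ` for the Thue–Morse morphism `μ(b) = b b̄` (`thueMorseSubst`),
so `σ(τ^K(0))` is the prefix of length `3 · 2^K` of the Thue–Morse word `t`, and it is followed by
`t(3 · 2^K) = 0`. Every block `σ(a)` starts with `0`, so a square `v v` in `τ^K(0)` becomes an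
overlap `σ(v) σ(v) 0` in `t`, and `t` is overlap-free.

For the factors, `mₙ₊₁ = τ²(mₙ) · 012`, while `τ²(102)` ends with `102` and `τ²(y)` starts with
`012 · y` for `y ∈ {021, 101202}`. Hence `τ²` maps an occurrence of `102 · mₙ · y` in
`τ^(2n+3)(0)` onto an occurrence of `102 · mₙ₊₁ · y` in `τ^(2n+5)(0)`; the case `n = 1` is
checked directly.
-/

namespace CritFact

def thueMorse : ℕ → Bool
  | 0 => false
  | n + 1 => xor ((n + 1) % 2 == 1) (thueMorse ((n + 1) / 2))

@[simp]
lemma thueMorse_zero : thueMorse 0 = false := by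
  rw [thueMorse]

@[simp]
lemma thueMorse_two_mul (n : ℕ) : thueMorse (2 * n) = thueMorse n := by
  cases n with
  | zero => rfl
  | succ n =>
    rw [show 2 * (n + 1) = (2 * n + 1) + 1 by ring, thueMorse]
    simp [show (2 * n + 1 + 1) % 2 = 0 by omega, show (2 * n + 1 + 1) / 2 = n + 1 by omega]

@[simp]
lemma thueMorse_two_mul_add_one (n : ℕ) : thueMorse (2 * n + 1) = !thueMorse n := by
  rw [thueMorse]
  simp [show (2 * n + 1) / 2 = n by omega]

@[simp]
lemma thueMorse_one : thueMorse 1 = true := by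
  simpa using thueMorse_two_mul_add_one 0

lemma thueMorse_ne_succ_of_even {n : ℕ} (hn : Even n) : thueMorse n ≠ thueMorse (n + 1) := by
  obtain ⟨a, rfl⟩ := hn
  simp [← two_mul]

lemma thueMorse_three_mul_two_pow (K : ℕ) : thueMorse (3 * 2 ^ K) = false := by
  induction K with
  | zero => simpa using thueMorse_two_mul_add_one 1
  | succ K ih => rwa [pow_succ, show 3 * (2 ^ K * 2) = 2 * (3 * 2 ^ K) by ring, thueMorse_two_mul]

lemma not_thueMorse_cube (n : ℕ) :
    ¬ (thueMorse n = thueMorse (n + 1) ∧ thueMorse (n + 1) = thueMorse (n + 2)) := by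
  rintro ⟨h₁, h₂⟩
  rcases Nat.even_or_odd n with hn | hn
  · exact thueMorse_ne_succ_of_even hn h₁
  · exact thueMorse_ne_succ_of_even (hn.add_one) h₂

/-- `f n ⋯ f (n + 2k)` is an overlap `a x a x a` with `|a x| = k`. -/
def HasOverlapAt {α : Type*} (f : ℕ → α) (n k : ℕ) : Prop :=
  ∀ p, n ≤ p → p ≤ n + k → f p = f (p + k)

lemma HasOverlapAt.thueMorse_half {n k : ℕ} (h : HasOverlapAt thueMorse n (2 * k)) :
    HasOverlapAt thueMorse (n / 2) k := by
  intro p hp₁ hp₂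
  rcases Nat.mod_two_eq_zero_or_one n with hn | hn
  · have := h (2 * p) (by omega) (by omega)
    rwa [← mul_add, thueMorse_two_mul, thueMorse_two_mul] at this
  · have := h (2 * p + 1) (by omega) (by omega)
    rwa [add_right_comm, ← mul_add, thueMorse_two_mul_add_one, thueMorse_two_mul_add_one,
      Bool.not_inj_iff] at this

lemma HasOverlapAt.thueMorse_eq_succ {n c a : ℕ} (h : HasOverlapAt thueMorse n (2 * c + 1))
    (ha₁ : n ≤ 2 * a) (ha₂ : 2 * a + 1 ≤ n + (2 * c + 1)) :
    thueMorse (a + c) = thueMorse (a + c + 1) := by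
  have even := h (2 * a) ha₁ (by omega)
  have odd := h (2 * a + 1) (by omega) ha₂
  rw [show 2 * a + (2 * c + 1) = 2 * (a + c) + 1 by ring] at even
  rw [show 2 * a + 1 + (2 * c + 1) = 2 * (a + c + 1) by ring] at odd
  simp only [thueMorse_two_mul, thueMorse_two_mul_add_one] at even odd
  rw [← odd, even, Bool.not_not]

/-- The three aligned pairs `t(2a) ≠ t(2a + 1)` inside the window meet the three residues mod 3
pairwise, so three Booleans would be pairwise distinct. -/
lemma not_hasOverlapAt_thueMorse_three (n : ℕ) : ¬ HasOverlapAt thueMorse n 3 := by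
  intro h
  have e₀ : thueMorse (n + 3) = thueMorse n := (h n le_rfl (by omega)).symm
  have e₁ : thueMorse (n + 4) = thueMorse (n + 1) := (h (n + 1) (by omega) (by omega)).symm
  have e₂ : thueMorse (n + 5) = thueMorse (n + 2) := (h (n + 2) (by omega) (by omega)).symm
  have e₃ : thueMorse (n + 6) = thueMorse (n + 3) := (h (n + 3) (by omega) (by omega)).symm
  have key : ∀ x y z : Bool, x ≠ y → y ≠ z → z ≠ x → False := by decide
  rcases Nat.even_or_odd n with hn | hn
  · have p₀ : thueMorse n ≠ thueMorse (n + 1) := thueMorse_ne_succ_of_even hn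
    have p₂ : thueMorse (n + 2) ≠ thueMorse (n + 3) :=
      thueMorse_ne_succ_of_even (by simpa [parity_simps])
    have p₄ : thueMorse (n + 4) ≠ thueMorse (n + 5) :=
      thueMorse_ne_succ_of_even (by simpa [parity_simps])
    rw [e₀] at p₂
    rw [e₁, e₂] at p₄
    exact key _ _ _ p₀ p₄ p₂
  · have p₁ : thueMorse (n + 1) ≠ thueMorse (n + 2) := thueMorse_ne_succ_of_even hn.add_one
    have p₃ : thueMorse (n + 3) ≠ thueMorse (n + 4) :=
      thueMorse_ne_succ_of_even (by simpa [parity_simps])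
    have p₅ : thueMorse (n + 5) ≠ thueMorse (n + 6) :=
      thueMorse_ne_succ_of_even (by simpa [parity_simps])
    rw [e₀, e₁] at p₃
    rw [e₂, e₃, e₀] at p₅
    exact key _ _ _ p₃ p₁ p₅

/-- An even period halves. An odd period `2c + 1` forces `t(a + c) = t(a + c + 1)` for every pair
`2a, 2a + 1` inside the window; for `c ≥ 2` there are two consecutive such pairs, giving a cube. -/
theorem not_hasOverlapAt_thueMorse {k : ℕ} (hk : 0 < k) (n : ℕ) :
    ¬ HasOverlapAt thueMorse n k := by
  induction k using Nat.strong_induction_on generalizing n with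
  | _ k ih =>
    intro h
    rcases Nat.even_or_odd' k with ⟨c, rfl | rfl⟩
    · exact ih c (by omega) (by omega) (n / 2) h.thueMorse_half
    · rcases (by omega : c = 0 ∨ c = 1 ∨ 2 ≤ c) with rfl | rfl | hc
      · exact not_thueMorse_cube n ⟨h n le_rfl (by omega), h (n + 1) (by omega) (by omega)⟩
      · exact not_hasOverlapAt_thueMorse_three n h
      · set a := (n + 1) / 2
        refine not_thueMorse_cube (a + c) ⟨?_, ?_⟩
        · exact h.thueMorse_eq_succ (by omega) (by omega)
        · have := h.thueMorse_eq_succ (a := a + 1) (by omega) (by omega)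
          rwa [add_right_comm a 1 c] at this

lemma SqFree.of_infix {α : Type*} {u w : List α} (hw : SqFree w) (h : u <:+: w) : SqFree u :=
  fun v hv hvv => hw v hv (hvv.trans h)

lemma exists_eq_map_range_of_infix {α : Type*} {f : ℕ → α} {w : List α} {M : ℕ}
    (h : w <:+: (List.range M).map f) :
    ∃ n, w = (List.range w.length).map fun j => f (n + j) := by
  obtain ⟨n, hn, hget⟩ := List.infix_iff_getElem?.mp h
  refine ⟨n, List.ext_getElem (by simp) fun i hi _ => ?_⟩
  have := hget i hi
  rw [List.getElem?_map, List.getElem?_range (by simp at hn; omega)] at this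
  simp [← Option.some.inj this, add_comm]

lemma hasOverlapAt_of_infix {α : Type*} {f : ℕ → α} {M : ℕ} {a : α} {x : List α}
    (h : (a :: x) ++ (a :: x) ++ [a] <:+: (List.range M).map f) :
    ∃ n, HasOverlapAt f n (x.length + 1) := by
  obtain ⟨n, hn⟩ := exists_eq_map_range_of_infix h
  refine ⟨n, fun p hp₁ hp₂ => ?_⟩
  obtain ⟨i, rfl⟩ := Nat.exists_eq_add_of_le hp₁
  have hw : a :: x ++ a :: x ++ [a] = (a :: x ++ [a]) ++ (x ++ [a]) := by simp
  have hw' : a :: x ++ a :: x ++ [a] = (a :: x) ++ (a :: x ++ [a]) := by simp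
  have hp := congrArg (·[i]?) hn
  have hq := congrArg (·[x.length + 1 + i]?) hn
  nth_rewrite 1 [hw] at hp
  nth_rewrite 1 [hw'] at hq
  rw [List.getElem?_append_left (by simp; omega), List.getElem?_map,
    List.getElem?_range (by simp; omega)] at hp
  rw [List.getElem?_append_right (by simp), List.getElem?_map,
    List.getElem?_range (by simp; omega)] at hq
  rw [List.length_cons, Nat.add_sub_cancel_left, hp] at hq
  simpa [add_comm, add_assoc] using hq

def thueCode (w : Word) : List Bool :=
  w.flatMap fun a => false :: List.replicate (2 - a.val) true

def thueMorseSubst (w : List Bool) : List Bool :=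
  w.flatMap fun b => [b, !b]

@[simp]
lemma thueCode_append (u v : Word) : thueCode (u ++ v) = thueCode u ++ thueCode v :=
  List.flatMap_append

@[simp]
lemma thueMorseSubst_append (u v : List Bool) :
    thueMorseSubst (u ++ v) = thueMorseSubst u ++ thueMorseSubst v :=
  List.flatMap_append

@[simp]
lemma tauW_cons (a : Fin 3) (w : Word) : tauW (a :: w) = tau a ++ tauW w := by
  simp [tauW]

@[simp]
lemma tauW_append (u v : Word) : tauW (u ++ v) = tauW u ++ tauW v := by
  simp [tauW]

lemma thueCode_tauW (w : Word) : thueCode (tauW w) = thueMorseSubst (thueCode w) := by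
  induction w with
  | nil => rfl
  | cons a w ih =>
    have ha : thueCode (tau a) = thueMorseSubst (thueCode [a]) := by fin_cases a <;> rfl
    rw [tauW_cons, thueCode_append, ih, ha, ← thueMorseSubst_append, ← thueCode_append]
    rfl

lemma thueMorseSubst_map_range (N : ℕ) :
    thueMorseSubst ((List.range N).map thueMorse) = (List.range (2 * N)).map thueMorse := by
  induction N with
  | zero => rfl
  | succ N ih =>
    rw [List.range_succ, List.map_append, thueMorseSubst_append, ih, mul_add, mul_one,
      List.range_add, List.map_append]
    simp [List.range_succ, thueMorseSubst]

lemma thueCode_iterate_tauW_zero (K : ℕ) :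
    thueCode (tauW^[K] [0]) = (List.range (3 * 2 ^ K)).map thueMorse := by
  induction K with
  | zero => simpa [thueCode, List.range_succ] using thueMorse_two_mul 1
  | succ K ih =>
    rw [Function.iterate_succ_apply', thueCode_tauW, ih, thueMorseSubst_map_range]
    congr 2
    ring

lemma thueCode_cons (a : Fin 3) (w : Word) :
    thueCode (a :: w) = false :: (List.replicate (2 - a.val) true ++ thueCode w) := rfl

lemma exists_thueCode_append_false_eq (w : Word) : ∃ y, thueCode w ++ [false] = false :: y := by
  cases w with
  | nil => exact ⟨[], rfl⟩
  | cons a w => exact ⟨_, by rw [thueCode_cons, List.cons_append]⟩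

theorem sqFree_iterate_tauW_zero (K : ℕ) : SqFree (tauW^[K] [0]) := by
  rintro (_ | ⟨a, v⟩) hv ⟨s, t, hst⟩
  · exact hv rfl
  have hprefix :
      thueCode (tauW^[K] [0]) ++ [false] = (List.range (3 * 2 ^ K + 1)).map thueMorse := by
    rw [List.range_succ, List.map_append, thueCode_iterate_tauW_zero, List.map_singleton,
      thueMorse_three_mul_two_pow]
  obtain ⟨y, hy⟩ := exists_thueCode_append_false_eq t
  obtain ⟨n, hn⟩ := hasOverlapAt_of_infix (f := thueMorse) (a := false) (M := 3 * 2 ^ K + 1)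
    (x := List.replicate (2 - a.val) true ++ thueCode v) ⟨thueCode s, y, by
      rw [← hprefix, ← hst]
      simp [hy, thueCode_cons]⟩
  exact not_hasOverlapAt_thueMorse (Nat.succ_pos _) n hn

lemma iterate_tauW_append (K : ℕ) (u v : Word) :
    tauW^[K] (u ++ v) = tauW^[K] u ++ tauW^[K] v := by
  induction K with
  | zero => rfl
  | succ K ih => simp only [Function.iterate_succ_apply', ih, tauW_append]

lemma length_le_length_tauW (w : Word) : w.length ≤ (tauW w).length := by
  induction w with
  | nil => exact le_rfl
  | cons a w ih =>
    have ha : 1 ≤ (tau a).length := by fin_cases a <;> simp [tau]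
    rw [tauW_cons, List.length_append, List.length_cons]
    omega

lemma length_le_length_iterate_tauW (K : ℕ) (w : Word) : w.length ≤ (tauW^[K] w).length := by
  induction K with
  | zero => exact le_rfl
  | succ K ih =>
    rw [Function.iterate_succ_apply']
    exact ih.trans (length_le_length_tauW _)

lemma iterate_succ_tauW_zero (K : ℕ) : tauW^[K + 1] [0] = tauW^[K] [0] ++ tauW^[K] [1, 2] :=
  iterate_tauW_append K [0] [1, 2]

lemma iterate_tauW_zero_prefix_of_le {K K' : ℕ} (h : K ≤ K') :
    tauW^[K] [0] <+: tauW^[K'] [0] := by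
  induction K', h using Nat.le_induction with
  | base => exact List.prefix_refl _
  | succ K' _ ih => exact ih.trans ⟨_, (iterate_succ_tauW_zero K').symm⟩

lemma lt_length_iterate_tauW_zero (K : ℕ) : K < (tauW^[K] [0]).length := by
  induction K with
  | zero => exact Nat.one_pos
  | succ K ih =>
    have := length_le_length_iterate_tauW K [1, 2]
    rw [iterate_succ_tauW_zero, List.length_append]
    simp only [List.length_cons, List.length_nil] at this
    omega

lemma getElem_iterate_tauW_zero (K : ℕ) {i : ℕ} (hi : i < (tauW^[K] [0]).length) :
    (tauW^[K] [0])[i] = mInf i := by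
  have hi' := lt_length_iterate_tauW_zero (i + 1)
  rw [mInf, List.getD_eq_getElem _ _ (by omega),
    (iterate_tauW_zero_prefix_of_le (le_max_left K (i + 1))).getElem hi,
    (iterate_tauW_zero_prefix_of_le (le_max_right K (i + 1))).getElem (by omega)]

lemma iterate_tauW_zero_eq_map_range (K : ℕ) :
    tauW^[K] [0] = (List.range (tauW^[K] [0]).length).map mInf :=
  List.ext_getElem (by simp) fun i hi _ => by simp [getElem_iterate_tauW_zero K hi]

lemma factorOfM_of_infix {u : Word} {K : ℕ} (h : u <:+: tauW^[K] [0]) : FactorOfM u := by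
  rw [iterate_tauW_zero_eq_map_range] at h
  exact exists_eq_map_range_of_infix h

lemma mWord_succ (n : ℕ) : mWord (n + 1) = tauW^[2] (mWord n) ++ [0, 1, 2] := by
  induction n with
  | zero => rfl
  | succ n ih =>
    have h : tauW^[2 * (n + 1) + 1] [0] = tauW^[2] (tauW^[2 * n + 1] [0]) := by
      rw [← Function.iterate_add_apply, show 2 + (2 * n + 1) = 2 * (n + 1) + 1 by ring]
    calc mWord (n + 2) = tauW^[2 * (n + 1) + 1] [0] ++ mWord (n + 1) := rfl
      _ = tauW^[2] (tauW^[2 * n + 1] [0] ++ mWord n) ++ [0, 1, 2] := by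
        rw [h, ih, iterate_tauW_append, List.append_assoc]

lemma infix_iterate_two_tauW {w y v : Word} (hy : [0, 1, 2] ++ y <+: tauW^[2] y)
    (h : [1, 0, 2] ++ w ++ y <:+: v) :
    [1, 0, 2] ++ (tauW^[2] w ++ [0, 1, 2]) ++ y <:+: tauW^[2] v := by
  obtain ⟨s, t, rfl⟩ := h
  obtain ⟨r, hr⟩ := hy
  have h102 : tauW^[2] [1, 0, 2] = [0, 1, 2, 1, 0, 1, 2, 0, 2] ++ [1, 0, 2] := by decide
  refine ⟨tauW^[2] s ++ [0, 1, 2, 1, 0, 1, 2, 0, 2], r ++ tauW^[2] t, ?_⟩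
  simp only [iterate_tauW_append, h102, ← hr, List.append_assoc]

lemma infix_iterate_tauW_zero {y : Word} (hy : [0, 1, 2] ++ y <+: tauW^[2] y)
    (h₁ : [1, 0, 2] ++ mWord 1 ++ y <:+: tauW^[5] [0]) {n : ℕ} (hn : 1 ≤ n) :
    [1, 0, 2] ++ mWord n ++ y <:+: tauW^[2 * n + 3] [0] := by
  induction n, hn using Nat.le_induction with
  | base => exact h₁
  | succ n _ ih =>
    rw [mWord_succ, show 2 * (n + 1) + 3 = 2 + (2 * n + 3) by ring, Function.iterate_add_apply]
    exact infix_iterate_two_tauW hy ih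

end CritFact

/-- for `n ≥ 1`, both `αₙ = 102·mₙ·021` and `βₙ = 102·mₙ·101202` are
factors of the infinite word `m`; in particular they are square-free. -/
theorem alpha_beta_factors_of_m (n : ℕ) (hn : 1 ≤ n) :
    CritFact.FactorOfM ([1, 0, 2] ++ CritFact.mWord n ++ [0, 2, 1]) ∧
    CritFact.FactorOfM ([1, 0, 2] ++ CritFact.mWord n ++ [1, 0, 1, 2, 0, 2]) ∧
    CritFact.SqFree ([1, 0, 2] ++ CritFact.mWord n ++ [0, 2, 1]) ∧
    CritFact.SqFree ([1, 0, 2] ++ CritFact.mWord n ++ [1, 0, 1, 2, 0, 2]) := by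
  have hα := CritFact.infix_iterate_tauW_zero (y := [0, 2, 1]) (by decide) (by decide) hn
  have hβ := CritFact.infix_iterate_tauW_zero (y := [1, 0, 1, 2, 0, 2]) (by decide) (by decide) hn
  have hm := CritFact.sqFree_iterate_tauW_zero (2 * n + 3)
  exact ⟨CritFact.factorOfM_of_infix hα, CritFact.factorOfM_of_infix hβ,
    hm.of_infix hα, hm.of_infix hβ⟩
end
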